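/- Let A be an N×N complex matrix all of whose eigenvalues lie in the strip {z ∈ ℂ : |Im z| ≤ π/2}. Then for every ℓ ≥ 1 the matrix φ_ℓ(A) is invertible. -/

import Mathlib

/-!
Since `φ_ℓ(A)` commutes with `A`, its kernel is `A`-invariant; if it were nonzero it would
contain an eigenvector `v` of `A`, say `A v = μ v`, and then `0 = φ_ℓ(A) v = φ_ℓ(μ) v`.
So it suffices that `φ_ℓ(μ) ≠ 0` in the strip. This follows from the representation
`(ℓ-1)! φ_ℓ(z) = ∫₀¹ e^{tz} (1-t)^{ℓ-1} dt` (integrate the exponential series term by term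
against Euler's Beta integral): for `|Im z| ≤ π/2` and `0 < t < 1` the integrand has real part
`e^{t Re z} cos(t Im z) (1-t)^{ℓ-1} > 0`.
-/

noncomputable def phiM {N : ℕ} (ℓ : ℕ) (A : Matrix (Fin N) (Fin N) ℂ) :
    Matrix (Fin N) (Fin N) ℂ :=
  ∑' k : ℕ, ((Nat.factorial (k + ℓ) : ℂ))⁻¹ • A ^ k

open scoped Nat

theorem summable_inv_factorial_add_smul_pow {𝕜 𝔸 : Type*} [RCLike 𝕜] [NormedRing 𝔸]
    [NormedAlgebra 𝕜 𝔸] [CompleteSpace 𝔸] (ℓ : ℕ) (a : 𝔸) :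
    Summable fun k : ℕ => ((k + ℓ)! : 𝕜)⁻¹ • a ^ k := by
  refine .of_norm_bounded_eventually_nat (Real.summable_pow_div_factorial ‖a‖) ?_
  filter_upwards [Filter.eventually_ge_atTop 1] with k hk
  calc ‖((k + ℓ)! : 𝕜)⁻¹ • a ^ k‖ = ((k + ℓ)! : ℝ)⁻¹ * ‖a ^ k‖ := by
        rw [norm_smul, norm_inv, RCLike.norm_natCast]
    _ ≤ (k ! : ℝ)⁻¹ * ‖a‖ ^ k := by
        gcongr
        · exact Nat.le_add_right k ℓ
        · exact norm_pow_le' a hk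
    _ = ‖a‖ ^ k / k ! := inv_mul_eq_div _ _

noncomputable def phi (ℓ : ℕ) (z : ℂ) : ℂ := ∑' k : ℕ, ((k + ℓ)! : ℂ)⁻¹ * z ^ k

theorem hasSum_phi (ℓ : ℕ) (z : ℂ) :
    HasSum (fun k : ℕ => ((k + ℓ)! : ℂ)⁻¹ * z ^ k) (phi ℓ z) :=
  (summable_inv_factorial_add_smul_pow (𝕜 := ℂ) ℓ z).hasSum

theorem integral_pow_mul_one_sub_pow (k m : ℕ) :
    ∫ t in (0 : ℝ)..1, (t : ℂ) ^ k * (1 - t) ^ m = k ! * m ! / (k + m + 1)! := by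
  have hpos (n : ℕ) : 0 < ((n : ℂ) + 1).re := by
    rw [Complex.add_re, Complex.natCast_re, Complex.one_re]
    positivity
  have hΓ := Complex.Gamma_mul_Gamma_eq_betaIntegral (hpos k) (hpos m)
  rw [show (k : ℂ) + 1 + (m + 1) = ((k + m + 1 : ℕ) : ℂ) + 1 by push_cast; ring] at hΓ
  simp only [Complex.Gamma_nat_eq_factorial, Complex.betaIntegral, add_sub_cancel_right,
    Complex.cpow_natCast] at hΓ
  rw [hΓ, mul_div_cancel_left₀ _ (Nat.cast_ne_zero.mpr (Nat.factorial_ne_zero _))]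

theorem norm_mul_pow_div_factorial_mul_one_sub_pow_le {t : ℝ} (ht : t ∈ Set.Ioc 0 1) (z : ℂ)
    (k m : ℕ) : ‖(t * z : ℂ) ^ k / k ! * (1 - t) ^ m‖ ≤ ‖z‖ ^ k / k ! := by
  have ht₁ : ‖(t : ℂ)‖ ≤ 1 := by
    rw [Complex.norm_real, Real.norm_of_nonneg ht.1.le]
    exact ht.2
  have ht₂ : ‖1 - (t : ℂ)‖ ≤ 1 := by
    rw [← Complex.ofReal_one, ← Complex.ofReal_sub, Complex.norm_real,
      Real.norm_of_nonneg (sub_nonneg.mpr ht.2)]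
    linarith [ht.1]
  calc ‖(t * z : ℂ) ^ k / k ! * (1 - t) ^ m‖
      = (‖(t : ℂ)‖ * ‖z‖) ^ k / k ! * ‖1 - (t : ℂ)‖ ^ m := by
        simp only [norm_mul, norm_div, norm_pow, Complex.norm_natCast]
    _ ≤ (1 * ‖z‖) ^ k / k ! * 1 ^ m := by gcongr
    _ = ‖z‖ ^ k / k ! := by rw [one_mul, one_pow, mul_one]

theorem factorial_mul_phi_succ_eq_integral (m : ℕ) (z : ℂ) :
    m ! * phi (m + 1) z = ∫ t in (0 : ℝ)..1, Complex.exp (t * z) * (1 - t) ^ m := by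
  have hterm (k : ℕ) : ∫ t in (0 : ℝ)..1, (t * z : ℂ) ^ k / k ! * (1 - t) ^ m =
      m ! * (((k + (m + 1))! : ℂ)⁻¹ * z ^ k) := by
    have hk : (k ! : ℂ) ≠ 0 := Nat.cast_ne_zero.mpr k.factorial_ne_zero
    calc ∫ t in (0 : ℝ)..1, (t * z : ℂ) ^ k / k ! * (1 - t) ^ m
        = z ^ k / k ! * ∫ t in (0 : ℝ)..1, (t : ℂ) ^ k * (1 - t) ^ m := by
          rw [← intervalIntegral.integral_const_mul]
          congr 1 with t
          ring
      _ = m ! * (((k + (m + 1))! : ℂ)⁻¹ * z ^ k) := by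
          rw [integral_pow_mul_one_sub_pow, ← add_assoc]
          field_simp
  have hsum : HasSum (fun k : ℕ => ∫ t in (0 : ℝ)..1, (t * z : ℂ) ^ k / k ! * (1 - t) ^ m)
      (∫ t in (0 : ℝ)..1, Complex.exp (t * z) * (1 - t) ^ m) := by
    refine intervalIntegral.hasSum_integral_of_dominated_convergence
      (fun k _ => ‖z‖ ^ k / k !) (fun k => by fun_prop) (fun k => .of_forall fun t ht => ?_)
      (.of_forall fun _ _ => Real.summable_pow_div_factorial ‖z‖) intervalIntegrable_const
      (.of_forall fun t _ => ?_)
    · rw [Set.uIoc_of_le zero_le_one] at ht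
      exact norm_mul_pow_div_factorial_mul_one_sub_pow_le ht z k m
    · rw [Complex.exp_eq_exp_ℂ]
      exact (NormedSpace.expSeries_div_hasSum_exp (t * z : ℂ)).mul_right _
  simp_rw [hterm] at hsum
  exact ((hasSum_phi (m + 1) z).mul_left _).unique hsum

theorem Complex.exp_re_pos_of_abs_im_lt {w : ℂ} (hw : |w.im| < Real.pi / 2) :
    0 < (Complex.exp w).re := by
  rw [Complex.exp_re]
  exact mul_pos (Real.exp_pos _) (Real.cos_pos_of_mem_Ioo (abs_lt.mp hw))

theorem re_integral_exp_mul_one_sub_pow_pos {z : ℂ} (hz : |z.im| ≤ Real.pi / 2) (m : ℕ) :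
    0 < (∫ t in (0 : ℝ)..1, Complex.exp (t * z) * (1 - t) ^ m).re := by
  rw [← RCLike.re_to_complex,
    ← intervalIntegral.intervalIntegral_re (by apply Continuous.intervalIntegrable; fun_prop)]
  refine intervalIntegral.intervalIntegral_pos_of_pos_on
    (by apply Continuous.intervalIntegrable; fun_prop) (fun t ht => ?_) zero_lt_one
  have him : |((t : ℂ) * z).im| < Real.pi / 2 := by
    rw [Complex.im_ofReal_mul, abs_mul, abs_of_pos ht.1]
    calc t * |z.im| ≤ t * (Real.pi / 2) := by gcongr; exact ht.1.le
      _ < Real.pi / 2 := mul_lt_of_lt_one_left (by positivity) ht.2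
  rw [← Complex.ofReal_one, ← Complex.ofReal_sub, ← Complex.ofReal_pow, RCLike.re_to_complex,
    Complex.re_mul_ofReal]
  exact mul_pos (Complex.exp_re_pos_of_abs_im_lt him) (pow_pos (sub_pos.mpr ht.2) m)

theorem phi_ne_zero {z : ℂ} (hz : |z.im| ≤ Real.pi / 2) {ℓ : ℕ} (hℓ : 1 ≤ ℓ) : phi ℓ z ≠ 0 := by
  obtain ⟨m, rfl⟩ := Nat.exists_eq_add_of_le' hℓ
  intro h
  have hpos := re_integral_exp_mul_one_sub_pow_pos hz m
  rw [← factorial_mul_phi_succ_eq_integral, h, mul_zero, Complex.zero_re] at hpos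
  exact hpos.false

theorem Module.End.isUnit_of_commute_of_forall_hasEigenvector {K V : Type*} [Field K]
    [IsAlgClosed K] [AddCommGroup V] [Module K V] [FiniteDimensional K V] {f g : Module.End K V}
    (hfg : Commute f g) (hg : ∀ μ v, f.HasEigenvector μ v → g v ≠ 0) : IsUnit g := by
  by_contra hu
  have hmaps : Set.MapsTo f (LinearMap.ker g) (LinearMap.ker g) := fun v hv => by
    rw [SetLike.mem_coe, LinearMap.mem_ker] at hv ⊢
    rw [← Module.End.mul_apply, ← hfg.eq, Module.End.mul_apply, hv, map_zero]
  have : Nontrivial (LinearMap.ker g) :=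
    Submodule.nontrivial_iff_ne_bot.mpr (mt (LinearMap.isUnit_iff_ker_eq_bot g).mpr hu)
  obtain ⟨μ, hμ⟩ := Module.End.exists_eigenvalue (f.restrict hmaps)
  obtain ⟨w, hw⟩ := hμ.exists_hasEigenvector
  refine hg μ w ⟨?_, by simpa using hw.2⟩ w.2
  rw [Module.End.mem_eigenspace_iff]
  exact congrArg Subtype.val hw.apply_eq_smul

section Matrix

open Matrix

variable {N : ℕ}

theorem hasSum_phiM (ℓ : ℕ) (A : Matrix (Fin N) (Fin N) ℂ) :
    HasSum (fun k : ℕ => ((k + ℓ)! : ℂ)⁻¹ • A ^ k) (phiM ℓ A) := by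
  -- The operator norm induces the entrywise topology, so summability transfers.
  let _ : NormedRing (Matrix (Fin N) (Fin N) ℂ) := Matrix.linftyOpNormedRing
  let _ : NormedAlgebra ℂ (Matrix (Fin N) (Fin N) ℂ) := Matrix.linftyOpNormedAlgebra
  exact (summable_inv_factorial_add_smul_pow ℓ A).hasSum

theorem commute_phiM (ℓ : ℕ) (A : Matrix (Fin N) (Fin N) ℂ) : Commute A (phiM ℓ A) :=
  Commute.tsum_right A fun k => (Commute.self_pow A k).smul_right _

theorem phiM_mulVec_eq_of_hasEigenvector {A : Matrix (Fin N) (Fin N) ℂ} {μ : ℂ}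
    {v : Fin N → ℂ} (hv : Module.End.HasEigenvector (toLin' A) μ v) (ℓ : ℕ) :
    phiM ℓ A *ᵥ v = phi ℓ μ • v := by
  let mulVecHom : Matrix (Fin N) (Fin N) ℂ →+ (Fin N → ℂ) :=
    AddMonoidHom.mk' (· *ᵥ v) fun M M' => add_mulVec M M' v
  have hcont : Continuous mulVecHom := continuous_id.matrix_mulVec continuous_const
  refine ((hasSum_phiM ℓ A).map mulVecHom hcont).unique ?_
  convert (hasSum_phi ℓ μ).smul_const v using 1
  ext k : 1
  simp [mulVecHom, ← toLin'_apply, hv.pow_apply, smul_smul]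

end Matrix

theorem phiM_isUnit {N : ℕ} (A : Matrix (Fin N) (Fin N) ℂ)
    (hA : ∀ μ : ℂ, A.charpoly.IsRoot μ → |μ.im| ≤ Real.pi / 2)
    (ℓ : ℕ) (hℓ : 1 ≤ ℓ) : IsUnit (phiM ℓ A) := by
  rw [← isUnit_map_iff Matrix.toLinAlgEquiv']
  refine Module.End.isUnit_of_commute_of_forall_hasEigenvector
    ((commute_phiM ℓ A).map Matrix.toLinAlgEquiv') fun μ v hv => ?_
  replace hv : Module.End.HasEigenvector (Matrix.toLin' A) μ v := hv
  have hμ : |μ.im| ≤ Real.pi / 2 := by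
    refine hA μ ?_
    rw [← Matrix.charpoly_toLin', ← Module.End.hasEigenvalue_iff_isRoot_charpoly]
    exact Module.End.hasEigenvalue_of_hasEigenvector hv
  rw [Matrix.toLinAlgEquiv'_apply, phiM_mulVec_eq_of_hasEigenvector hv]
  exact smul_ne_zero (phi_ne_zero hμ hℓ) hv.2
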